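/- For Lebesgue-almost every a ∈ [0,1], E_a = K ∩ (K + a) equals the statistically self-similar set G_a generated by the similitudes ψ_1(x) = x/3 and ψ_2(x) = x/3 + 2/3 with index sets N_{a,k}; that is, for every nonempty compact F ⊆ ℝ, the sets ψ_a^k(F) = ⋃_{(j_1,…,j_k) ∈ L_a^k} (ψ_{j_1} ∘ ⋯ ∘ ψ_{j_k})(F) converge to E_a in the Hausdorff metric as k → ∞. -/

import Mathlib

open MeasureTheory Metric Filter Set

/-- The composition `ψ_{j 0} ∘ ψ_{j 1} ∘ ⋯ ∘ ψ_{j (k-1)}`. -/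
noncomputable def iterMap {X : Type*} {m : ℕ} (ψ : Fin m → X → X) :
    (k : ℕ) → (Fin k → Fin m) → X → X
  | 0, _ => id
  | k + 1, j => ψ (j 0) ∘ iterMap ψ k (fun i => j i.succ)

/-- The `i`-th digit (for `i ≥ 1`) of the triadic expansion `a = 0.a_1a_2a_3…`. -/
noncomputable def triadicDigit (a : ℝ) (i : ℕ) : ℕ := (⌊3 ^ i * a⌋ % 3).toNat

/-- The index set `N_{a,k} ⊆ {1,2}` (here `0 : Fin 2` stands for `ψ_1` and `1 : Fin 2`
for `ψ_2`): `N_{a,k} = {1}` if `a_k ≠ 2` and `a_1 + ⋯ + a_{k-1}` is odd, `{2}` if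
`a_k ≠ 0` and the sum is even, and `{1,2}` if `a_k = 2` with odd sum or `a_k = 0`
with even sum. -/
noncomputable def Nak (a : ℝ) (k : ℕ) : Finset (Fin 2) :=
  if Even (∑ l ∈ Finset.Ico 1 k, triadicDigit a l) then
    (if triadicDigit a k = 0 then {0, 1} else {1})
  else
    (if triadicDigit a k = 2 then {0, 1} else {0})

/-- The similitudes `ψ_1(x) = x/3` and `ψ_2(x) = x/3 + 2/3`. -/
noncomputable def cantorPsi : Fin 2 → ℝ → ℝ :=
  ![fun x => x / 3, fun x => x / 3 + 2 / 3]

/-- `ψ_a^k(F) = ⋃_{(j_1,…,j_k) ∈ L_a^k} (ψ_{j_1} ∘ ⋯ ∘ ψ_{j_k})(F)` with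
`L_a^k = N_{a,1} × ⋯ × N_{a,k}`. -/
noncomputable def psiImageA (a : ℝ) (k : ℕ) (F : Set ℝ) : Set ℝ :=
  ⋃ j ∈ (Finset.univ : Finset (Fin k → Fin 2)).filter
      (fun j => ∀ i : Fin k, j i ∈ Nak a (i + 1)),
    iterMap cantorPsi k j '' F

/-- The point `0.(2 u₀)(2 u₁)(2 u₂)… ` in ternary. -/
noncomputable def cpoint (u : ℕ → Fin 2) : ℝ := ∑' l, (2 * (u l : ℕ) : ℝ) / 3 ^ (l + 1)

/-- Partial sum of the first `N` ternary digits. -/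
noncomputable def Xp (u : ℕ → Fin 2) (N : ℕ) : ℝ :=
  ∑ l ∈ Finset.range N, (2 * (u l : ℕ) : ℝ) / 3 ^ (l + 1)

lemma cterm_le (u : ℕ → Fin 2) (l : ℕ) :
    (2 * (u l : ℕ) : ℝ) / 3 ^ (l + 1) ≤ (2/3 : ℝ) * (1/3)^l := by
  have h1 : ((u l : ℕ) : ℝ) ≤ 1 := by
    have := (u l).2; exact_mod_cast Nat.lt_succ_iff.mp this
  have h3 : (0:ℝ) < 3 ^ (l+1) := by positivity
  rw [div_le_iff₀ h3]
  have : (2/3 : ℝ) * (1/3)^l * 3^(l+1) = 2 := by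
    rw [one_div, inv_pow]; field_simp; ring
  rw [this]; linarith

lemma summable_geo23 : Summable (fun l => (2/3 : ℝ) * (1/3)^l) :=
  (summable_geometric_of_lt_one (by norm_num) (by norm_num)).mul_left _

lemma summable_cterm (u : ℕ → Fin 2) :
    Summable (fun l => (2 * (u l : ℕ) : ℝ) / 3 ^ (l + 1)) :=
  Summable.of_nonneg_of_le (fun l => by positivity) (cterm_le u) summable_geo23

lemma cpoint_nonneg (u : ℕ → Fin 2) : 0 ≤ cpoint u :=
  tsum_nonneg (fun l => by positivity)

lemma cpoint_le_one (u : ℕ → Fin 2) : cpoint u ≤ 1 := by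
  have h := Summable.tsum_le_tsum (cterm_le u) (summable_cterm u) summable_geo23
  calc cpoint u ≤ ∑' l, (2/3 : ℝ) * (1/3)^l := h
    _ = 1 := by
      rw [tsum_mul_left, tsum_geometric_of_lt_one (by norm_num) (by norm_num)]
      norm_num

lemma cpoint_shift (u : ℕ → Fin 2) :
    cpoint u = (2 * (u 0 : ℕ) : ℝ) / 3 + cpoint (fun l => u (l + 1)) / 3 := by
  rw [cpoint, Summable.tsum_eq_zero_add (summable_cterm u)]
  congr 1
  · norm_num
  · rw [cpoint, ← tsum_div_const]
    congr 1 with l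
    rw [div_div, ← pow_succ]

lemma cpoint_tail (N : ℕ) : ∀ (u : ℕ → Fin 2),
    cpoint u = Xp u N + cpoint (fun l => u (l + N)) / 3 ^ N := by
  induction N with
  | zero => intro u; simp [Xp]
  | succ N ih =>
    intro u
    rw [cpoint_shift u, ih (fun l => u (l + 1))]
    have h1 : Xp u (N + 1) = (2 * (u 0 : ℕ) : ℝ) / 3
        + (∑ l ∈ Finset.range N, (2 * (u (l+1) : ℕ) : ℝ) / 3 ^ (l + 1 + 1)) := by
      rw [Xp, Finset.sum_range_succ']
      ring
    have h2 : (∑ l ∈ Finset.range N, (2 * (u (l+1) : ℕ) : ℝ) / 3 ^ (l + 1 + 1))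
        = Xp (fun l => u (l + 1)) N / 3 := by
      rw [Xp, Finset.sum_div]
      congr 1 with l
      rw [div_div, ← pow_succ]
    have h3 : (fun l => u (l + N + 1)) = (fun l => u (l + (N + 1))) := rfl
    rw [h1, h2, h3, pow_succ]
    ring

lemma preCantorSet_subset_unitInterval' (n : ℕ) : preCantorSet n ⊆ Icc 0 1 := by
  induction n with
  | zero => exact le_refl _
  | succ n ih =>
    rintro x (⟨y, hy, rfl⟩ | ⟨y, hy, rfl⟩)
    · obtain ⟨h0, h1⟩ := ih hy
      constructor <;> [linarith; linarith]
    · obtain ⟨h0, h1⟩ := ih hy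
      constructor <;> [linarith; linarith]

lemma cpoint_mem_preCantorSet (n : ℕ) : ∀ u : ℕ → Fin 2, cpoint u ∈ preCantorSet n := by
  induction n with
  | zero => exact fun u => ⟨cpoint_nonneg u, cpoint_le_one u⟩
  | succ n ih =>
    intro u
    have h := ih (fun l => u (l + 1))
    rcases Fin.exists_fin_two.mp ⟨u 0, rfl⟩ with h0 | h0
    all_goals rw [preCantorSet_succ]
    · left
      exact ⟨cpoint (fun l => u (l + 1)), h, by rw [cpoint_shift u, h0]; simp⟩
    · right
      refine ⟨cpoint (fun l => u (l + 1)), h, ?_⟩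
      rw [cpoint_shift u, h0]
      show (2 + cpoint fun l => u (l + 1)) / 3 = _
      norm_num
      ring

lemma cpoint_mem_cantorSet (u : ℕ → Fin 2) : cpoint u ∈ cantorSet :=
  Set.mem_iInter.mpr (fun n => cpoint_mem_preCantorSet n u)

lemma cantorSet_step {x : ℝ} (hx : x ∈ cantorSet) :
    3 * x ∈ cantorSet ∨ 3 * x - 2 ∈ cantorSet := by
  by_cases hlt : x < 2/3
  · left
    refine Set.mem_iInter.mpr (fun n => ?_)
    have h := Set.mem_iInter.mp hx (n + 1)
    rcases h with ⟨y, hy, hyx⟩ | ⟨y, hy, hyx⟩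
    · have : y = 3 * x := by dsimp at hyx; linarith
      rwa [← this]
    · exfalso
      have h0 := (preCantorSet_subset_unitInterval' n hy).1
      dsimp at hyx
      linarith
  · right
    refine Set.mem_iInter.mpr (fun n => ?_)
    have h := Set.mem_iInter.mp hx (n + 1)
    rcases h with ⟨y, hy, hyx⟩ | ⟨y, hy, hyx⟩
    · exfalso
      have h1 := (preCantorSet_subset_unitInterval' n hy).2
      dsimp at hyx
      linarith
    · have : y = 3 * x - 2 := by dsimp at hyx; linarith
      rwa [← this]

open scoped Classical in
/-- Recursive digit extraction from a Cantor set point. -/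
noncomputable def cstep (x : {x : ℝ // x ∈ cantorSet}) : Fin 2 × {x : ℝ // x ∈ cantorSet} :=
  if h : 3 * (x : ℝ) ∈ cantorSet then (0, ⟨3 * (x:ℝ), h⟩)
  else (1, ⟨3 * (x:ℝ) - 2, (cantorSet_step x.2).resolve_left h⟩)

lemma cstep_spec (x : {x : ℝ // x ∈ cantorSet}) :
    (x : ℝ) = (2 * ((cstep x).1 : ℕ) : ℝ) / 3 + ((cstep x).2 : ℝ) / 3 := by
  rw [cstep]
  split
  all_goals simp
  all_goals ring

lemma Xp_succ (u : ℕ → Fin 2) (N : ℕ) :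
    Xp u (N + 1) = Xp u N + (2 * (u N : ℕ) : ℝ) / 3 ^ (N + 1) :=
  Finset.sum_range_succ _ _

noncomputable def cseq (x : {x : ℝ // x ∈ cantorSet}) : ℕ → {x : ℝ // x ∈ cantorSet}
  | 0 => x
  | n + 1 => (cstep (cseq x n)).2

noncomputable def cdig (x : {x : ℝ // x ∈ cantorSet}) (n : ℕ) : Fin 2 := (cstep (cseq x n)).1

lemma cseq_invariant (x : {x : ℝ // x ∈ cantorSet}) (n : ℕ) :
    (x : ℝ) = Xp (cdig x) n + ((cseq x n : ℝ)) / 3 ^ n := by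
  induction n with
  | zero => simp [Xp, cseq]
  | succ n ih =>
    rw [ih, Xp_succ]
    have h2 : ((cseq x (n+1) : ℝ)) = (cstep (cseq x n)).2 := rfl
    have h3 : ((cseq x n : ℝ)) = (2 * ((cdig x n) : ℕ) : ℝ) / 3 + ((cstep (cseq x n)).2 : ℝ) / 3 :=
      cstep_spec (cseq x n)
    rw [h2, h3, pow_succ]
    field_simp
    ring

lemma exists_cpoint {x : ℝ} (hx : x ∈ cantorSet) : ∃ u : ℕ → Fin 2, cpoint u = x := by
  refine ⟨cdig ⟨x, hx⟩, ?_⟩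
  set u := cdig ⟨x, hx⟩ with hu
  have habs : ∀ n : ℕ, |cpoint u - x| ≤ 2 * (1/3 : ℝ) ^ n := by
    intro n
    have h1 := cpoint_tail n u
    have h2 : x = Xp u n + ((cseq ⟨x, hx⟩ n : ℝ)) / 3 ^ n := cseq_invariant ⟨x, hx⟩ n
    have h3 : (0:ℝ) ≤ ((cseq ⟨x, hx⟩ n : ℝ)) :=
      (cantorSet_subset_unitInterval (cseq ⟨x, hx⟩ n).2).1
    have h4 : ((cseq ⟨x, hx⟩ n : ℝ)) ≤ 1 :=
      (cantorSet_subset_unitInterval (cseq ⟨x, hx⟩ n).2).2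
    have h5 := cpoint_nonneg (fun l => u (l + n))
    have h6 := cpoint_le_one (fun l => u (l + n))
    have hp : (0:ℝ) < 3 ^ n := by positivity
    have hdiff : cpoint u - x
        = (cpoint (fun l => u (l + n)) - ((cseq ⟨x, hx⟩ n : ℝ))) / 3 ^ n := by
      linear_combination h1 - h2
    have habs2 : |cpoint (fun l => u (l + n)) - ((cseq ⟨x, hx⟩ n : ℝ))| ≤ 2 :=
      abs_le.mpr ⟨by linarith, by linarith⟩
    have hrhs : 2 * (1/3 : ℝ) ^ n = 2 / 3 ^ n := by
      rw [div_pow, one_pow]; ring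
    rw [hdiff, abs_div, abs_of_pos hp, hrhs]
    gcongr
  have hT : Filter.Tendsto (fun n : ℕ => 2 * (1/3 : ℝ) ^ n) Filter.atTop (nhds 0) := by
    have := (tendsto_pow_atTop_nhds_zero_of_lt_one
      (by norm_num : (0:ℝ) ≤ 1/3) (by norm_num)).const_mul (2:ℝ)
    simpa using this
  have h0 : |cpoint u - x| ≤ 0 := ge_of_tendsto hT (Filter.Eventually.of_forall habs)
  have h1 : cpoint u - x = 0 := abs_nonpos_iff.mp h0
  linarith

lemma td_cast (a : ℝ) (i : ℕ) : (triadicDigit a i : ℤ) = ⌊3 ^ i * a⌋ % 3 :=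
  Int.toNat_of_nonneg (Int.emod_nonneg _ (by norm_num))

lemma td_lt (a : ℝ) (i : ℕ) : triadicDigit a i < 3 := by
  have h := Int.emod_lt_of_pos ⌊3 ^ i * a⌋ (show (0:ℤ) < 3 by norm_num)
  have h2 := td_cast a i
  omega

lemma floor_succ (a : ℝ) (k : ℕ) :
    ⌊(3:ℝ) ^ (k+1) * a⌋ = 3 * ⌊(3:ℝ) ^ k * a⌋ + (triadicDigit a (k+1) : ℤ) := by
  have h3 : (3:ℝ) ^ (k+1) * a = 3 * (3 ^ k * a) := by ring
  have hb1 : 3 * ⌊(3:ℝ) ^ k * a⌋ ≤ ⌊(3:ℝ) * (3 ^ k * a)⌋ := by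
    apply Int.le_floor.mpr
    push_cast
    nlinarith [Int.floor_le ((3:ℝ) ^ k * a)]
  have hb2 : ⌊(3:ℝ) * (3 ^ k * a)⌋ < 3 * ⌊(3:ℝ) ^ k * a⌋ + 3 := by
    apply Int.floor_lt.mpr
    push_cast
    nlinarith [Int.lt_floor_add_one ((3:ℝ) ^ k * a)]
  have h2 := td_cast a (k+1)
  rw [h3] at h2
  rw [show ⌊(3:ℝ) ^ (k+1) * a⌋ = ⌊(3:ℝ) * (3 ^ k * a)⌋ from by rw [h3]]
  omega

lemma floor_zero_pow {a : ℝ} (ha0 : 0 ≤ a) (ha1 : a < 1) : ⌊(3:ℝ) ^ 0 * a⌋ = 0 := by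
  rw [pow_zero, one_mul]
  exact Int.floor_eq_zero_iff.mpr ⟨ha0, ha1⟩

/-- Integer version of `3^N * Xp u N`. -/
def SX (u : ℕ → Fin 2) : ℕ → ℤ
  | 0 => 0
  | N + 1 => 3 * SX u N + 2 * (u N : ℕ)

lemma SX_cast (u : ℕ → Fin 2) : ∀ N, (SX u N : ℝ) = 3 ^ N * Xp u N := by
  intro N
  induction N with
  | zero => simp [SX, Xp]
  | succ N ih =>
    rw [SX, Xp_succ]
    push_cast
    rw [ih, pow_succ]
    field_simp

lemma Nak_cases {a : ℝ} {k : ℕ} {w : Fin 2} (h : w ∈ Nak a k) :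
    ((∑ l ∈ Finset.Ico 1 k, triadicDigit a l) % 2 = 0
        ∧ (triadicDigit a k = 0 ∨ (w : ℕ) = 1)) ∨
    ((∑ l ∈ Finset.Ico 1 k, triadicDigit a l) % 2 = 1
        ∧ (triadicDigit a k = 2 ∨ (w : ℕ) = 0)) := by
  rw [Nak] at h
  split_ifs at h with h1 h2 h3
  · exact Or.inl ⟨Nat.even_iff.mp h1, Or.inl h2⟩
  · rw [Finset.mem_singleton] at h
    exact Or.inl ⟨Nat.even_iff.mp h1, Or.inr (by rw [h]; rfl)⟩
  · exact Or.inr ⟨Nat.not_even_iff.mp h1, Or.inl h3⟩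
  · rw [Finset.mem_singleton] at h
    exact Or.inr ⟨Nat.not_even_iff.mp h1, Or.inr (by rw [h]; rfl)⟩

lemma eq_zero_of_abs_le_geo {C L : ℝ} (h : ∀ N : ℕ, |L| ≤ C * (1/3) ^ N) : L = 0 := by
  have hT : Filter.Tendsto (fun n : ℕ => C * (1/3 : ℝ) ^ n) Filter.atTop (nhds 0) := by
    have := (tendsto_pow_atTop_nhds_zero_of_lt_one
      (by norm_num : (0:ℝ) ≤ 1/3) (by norm_num)).const_mul C
    simpa using this
  have h0 : |L| ≤ 0 := ge_of_tendsto hT (Filter.Eventually.of_forall h)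
  exact abs_nonpos_iff.mp h0

/-- Core Lemma B: digits of points of `K ∩ (K+a)` are admissible. -/
lemma coreB {a : ℝ} (ha0 : 0 < a) (ha1 : a < 1)
    (hirr : ∀ (N : ℕ) (m : ℤ), (3:ℝ) ^ N * a ≠ (m : ℝ))
    (u v : ℕ → Fin 2) (huv : cpoint u = cpoint v + a) (N : ℕ) :
    u N ∈ Nak a (N + 1) := by
  set c : ℕ → ℤ := fun M => SX u M - SX v M - ⌊(3:ℝ) ^ M * a⌋ with hc
  have c_real : ∀ M, (c M : ℝ)
      = ((3:ℝ) ^ M * a - ⌊(3:ℝ) ^ M * a⌋) + cpoint (fun l => v (l + M))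
        - cpoint (fun l => u (l + M)) := by
    intro M
    have h1 := cpoint_tail M u
    have h2 := cpoint_tail M v
    have hp : (0:ℝ) < 3 ^ M := by positivity
    have hXu : (SX u M : ℝ) = 3 ^ M * Xp u M := SX_cast u M
    have hXv : (SX v M : ℝ) = 3 ^ M * Xp v M := SX_cast v M
    rw [hc]
    push_cast
    rw [hXu, hXv]
    have e1 : Xp u M = cpoint u - cpoint (fun l => u (l + M)) / 3 ^ M := by linarith
    have e2 : Xp v M = cpoint v - cpoint (fun l => v (l + M)) / 3 ^ M := by linarith
    rw [e1, e2, huv]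
    field_simp
    ring
  have c_mem : ∀ M, c M = 0 ∨ c M = 1 := by
    intro M
    have hr := c_real M
    have hfl := Int.floor_le ((3:ℝ) ^ M * a)
    have hfl2 := Int.lt_floor_add_one ((3:ℝ) ^ M * a)
    have hne : (3:ℝ) ^ M * a ≠ (⌊(3:ℝ) ^ M * a⌋ : ℝ) := hirr M _
    have hθ : 0 < (3:ℝ) ^ M * a - ⌊(3:ℝ) ^ M * a⌋ := lt_of_le_of_ne (by linarith) (by
      intro hcon; exact hne (by linarith))
    have h1 := cpoint_nonneg (fun l => u (l + M))
    have h2 := cpoint_le_one (fun l => u (l + M))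
    have h3 := cpoint_nonneg (fun l => v (l + M))
    have h4 := cpoint_le_one (fun l => v (l + M))
    have hlow : (-1 : ℝ) < (c M : ℝ) := by rw [hr]; linarith
    have hhigh : (c M : ℝ) < 2 := by rw [hr]; linarith
    have hlow' : (-1 : ℤ) < c M := by exact_mod_cast hlow
    have hhigh' : c M < 2 := by exact_mod_cast hhigh
    omega
  have c_rec : ∀ M, c (M+1) = 3 * c M + 2 * ((u M : ℕ) : ℤ) - 2 * ((v M : ℕ) : ℤ)
      - (triadicDigit a (M+1) : ℤ) := by
    intro M
    have hf := floor_succ a M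
    simp only [hc, SX]
    omega
  have c_zero : c 0 = 0 := by
    simp only [hc, SX, floor_zero_pow (le_of_lt ha0) ha1]
    ring
  have parity : ∀ M, (c M) % 2
      = ((∑ l ∈ Finset.Ico 1 (M+1), triadicDigit a l : ℕ) : ℤ) % 2 := by
    intro M
    induction M with
    | zero => simp [c_zero]
    | succ M ih =>
      have hs : (∑ l ∈ Finset.Ico 1 (M+1+1), triadicDigit a l)
          = (∑ l ∈ Finset.Ico 1 (M+1), triadicDigit a l) + triadicDigit a (M+1) :=
        Finset.sum_Ico_succ_top (by omega) _
      have hr := c_rec M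
      have hs' : ((∑ l ∈ Finset.Ico 1 (M+1+1), triadicDigit a l : ℕ) : ℤ)
          = ((∑ l ∈ Finset.Ico 1 (M+1), triadicDigit a l : ℕ) : ℤ)
            + (triadicDigit a (M+1) : ℤ) := by exact_mod_cast hs
      omega
  -- now the membership
  have hcN := c_mem N
  have hcN1 := c_mem (N+1)
  have hrec := c_rec N
  have hpar := parity N
  have htd := td_lt a (N+1)
  have hu2 : (u N : ℕ) < 2 := (u N).2
  have hv2 : (v N : ℕ) < 2 := (v N).2
  have h01 : ∀ w : Fin 2, w ∈ ({0, 1} : Finset (Fin 2)) := by decide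
  rw [Nak]
  split_ifs with h1 h2 h3
  · exact h01 _
  · rw [Finset.mem_singleton]
    apply Fin.ext
    rw [Nat.even_iff] at h1
    have hone : ((1 : Fin 2) : ℕ) = 1 := rfl
    rw [hone]
    omega
  · exact h01 _
  · rw [Finset.mem_singleton]
    apply Fin.ext
    rw [Nat.even_iff] at h1
    have hzero : ((0 : Fin 2) : ℕ) = 0 := rfl
    rw [hzero]
    omega

/-- Core Lemma A: every admissible digit sequence gives a point of `K ∩ (K+a)`. -/
lemma coreA {a : ℝ} (ha0 : 0 ≤ a) (ha1 : a < 1) (u : ℕ → Fin 2)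
    (hu : ∀ N, u N ∈ Nak a (N + 1)) :
    ∃ v : ℕ → Fin 2, cpoint u = cpoint v + a := by
  classical
  set cc : ℕ → ℕ := fun N => (∑ l ∈ Finset.Ico 1 (N+1), triadicDigit a l) % 2 with hcc
  set v : ℕ → Fin 2 := fun N =>
    if (2:ℤ) ≤ 3 * cc N + 2 * (u N : ℕ) - triadicDigit a (N+1) - cc (N+1) then 1 else 0 with hv
  have key : ∀ N, 2 * ((v N : ℕ) : ℤ)
      = 3 * cc N + 2 * ((u N : ℕ) : ℤ) - triadicDigit a (N+1) - cc (N+1) := by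
    intro N
    have hs : (∑ l ∈ Finset.Ico 1 (N+1+1), triadicDigit a l)
        = (∑ l ∈ Finset.Ico 1 (N+1), triadicDigit a l) + triadicDigit a (N+1) :=
      Finset.sum_Ico_succ_top (by omega) _
    have hcase := Nak_cases (hu N)
    have htd := td_lt a (N+1)
    have hcc0 : cc N = (∑ l ∈ Finset.Ico 1 (N+1), triadicDigit a l) % 2 := rfl
    have hcc1 : cc (N+1) = (∑ l ∈ Finset.Ico 1 (N+1+1), triadicDigit a l) % 2 := rfl
    have hone : ((1 : Fin 2) : ℕ) = 1 := rfl
    have hzero : ((0 : Fin 2) : ℕ) = 0 := rfl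
    rw [hv]
    dsimp only
    rcases hcase with ⟨hp, hd | hd⟩ | ⟨hp, hd | hd⟩ <;>
      (split_ifs with h; · rw [hone]; omega
       · rw [hzero]; omega)
  have hXY : ∀ N, Xp u N - Xp v N
      = ((⌊(3:ℝ)^N * a⌋ : ℤ) : ℝ) / 3^N + (cc N : ℝ) / 3^N := by
    intro N
    induction N with
    | zero =>
      rw [floor_zero_pow ha0 ha1]
      simp [Xp, hcc]
    | succ N ih =>
      have hf : ((⌊(3:ℝ)^(N+1) * a⌋ : ℤ) : ℝ)
          = 3 * ((⌊(3:ℝ)^N * a⌋ : ℤ) : ℝ) + (triadicDigit a (N+1) : ℝ) := by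
        exact_mod_cast floor_succ a N
      have hk : (2 : ℝ) * ((v N : ℕ) : ℝ)
          = 3 * (cc N : ℝ) + 2 * ((u N : ℕ) : ℝ) - (triadicDigit a (N+1) : ℝ)
            - (cc (N+1) : ℝ) := by exact_mod_cast key N
      rw [Xp_succ, Xp_succ]
      rw [pow_succ] at hf ⊢
      linear_combination ih - hf / (3^N * 3) - hk / (3^N * 3)
  refine ⟨v, ?_⟩
  have hzero : cpoint u - (cpoint v + a) = 0 := by
    apply eq_zero_of_abs_le_geo (C := 4)
    intro N
    have h1 := cpoint_tail N u
    have h2 := cpoint_tail N v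
    have hp : (0:ℝ) < 3 ^ N := by positivity
    have hfl := Int.floor_le ((3:ℝ) ^ N * a)
    have hfl2 := Int.lt_floor_add_one ((3:ℝ) ^ N * a)
    have htu0 := cpoint_nonneg (fun l => u (l + N))
    have htu1 := cpoint_le_one (fun l => u (l + N))
    have htv0 := cpoint_nonneg (fun l => v (l + N))
    have htv1 := cpoint_le_one (fun l => v (l + N))
    have hccb : cc N < 2 := Nat.mod_lt _ (by norm_num)
    have hccb' : (cc N : ℝ) ≤ 1 := by exact_mod_cast Nat.lt_succ_iff.mp hccb
    have hcc0' : (0:ℝ) ≤ (cc N : ℝ) := by positivity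
    have e : cpoint u - (cpoint v + a) = (Xp u N - Xp v N - a)
        + (cpoint (fun l => u (l + N)) - cpoint (fun l => v (l + N))) / 3^N := by
      rw [h1, h2]; ring
    have e2 : Xp u N - Xp v N - a
        = (((⌊(3:ℝ)^N * a⌋ : ℤ) : ℝ) + (cc N : ℝ) - 3^N * a) / 3^N := by
      rw [hXY N]
      field_simp
    have e3 : cpoint u - (cpoint v + a)
        = ((((⌊(3:ℝ)^N * a⌋ : ℤ) : ℝ) + (cc N : ℝ) - 3^N * a)
          + (cpoint (fun l => u (l + N)) - cpoint (fun l => v (l + N)))) / 3^N := by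
      rw [e, e2]; ring
    have h4 : 4 * (1/3:ℝ)^N = 4 / 3^N := by rw [div_pow, one_pow]; ring
    rw [e3, abs_div, abs_of_pos hp, h4]
    have habs : |(((⌊(3:ℝ)^N * a⌋ : ℤ) : ℝ) + (cc N : ℝ) - 3^N * a)
          + (cpoint (fun l => u (l + N)) - cpoint (fun l => v (l + N)))| ≤ 4 :=
      abs_le.mpr ⟨by linarith, by linarith⟩
    gcongr
  linarith [hzero]

lemma cantorPsi_apply (w : Fin 2) (x : ℝ) :
    cantorPsi w x = x / 3 + (2 * (w : ℕ) : ℝ) / 3 := by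
  fin_cases w <;> simp [cantorPsi]

lemma iterMap_eq : ∀ (k : ℕ) (j : Fin k → Fin 2) (t : ℝ),
    iterMap cantorPsi k j t
      = (∑ i : Fin k, (2 * (j i : ℕ) : ℝ) / 3 ^ ((i : ℕ) + 1)) + t / 3 ^ k := by
  intro k
  induction k with
  | zero => intro j t; simp [iterMap]
  | succ k ih =>
    intro j t
    show cantorPsi (j 0) (iterMap cantorPsi k (fun i => j i.succ) t) = _
    rw [cantorPsi_apply, ih]
    rw [Fin.sum_univ_succ]
    have hterm : ∀ i : Fin k, (2 * ((j i.succ) : ℕ) : ℝ) / 3 ^ (((i.succ : Fin (k+1)) : ℕ) + 1)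
        = ((2 * ((j i.succ) : ℕ) : ℝ) / 3 ^ ((i : ℕ) + 1)) / 3 := by
      intro i
      rw [div_div, ← pow_succ]
      congr 2
    rw [Finset.sum_congr rfl (fun i _ => hterm i), ← Finset.sum_div, pow_succ]
    have h0 : (((0 : Fin (k+1)) : ℕ)) = 0 := rfl
    rw [h0]
    field_simp
    ring

lemma sum_fin_eq_Xp (J : ℕ → Fin 2) (k : ℕ) :
    (∑ i : Fin k, (2 * ((J (i : ℕ)) : ℕ) : ℝ) / 3 ^ ((i : ℕ) + 1)) = Xp J k := by
  unfold Xp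
  exact Fin.sum_univ_eq_sum_range (fun l => (2 * ((J l : ℕ)) : ℝ) / 3 ^ (l + 1)) k

lemma mem_psiImageA {a : ℝ} {k : ℕ} {F : Set ℝ} {J : ℕ → Fin 2}
    (hJ : ∀ i : Fin k, J (i : ℕ) ∈ Nak a ((i : ℕ) + 1)) {f : ℝ} (hf : f ∈ F) :
    Xp J k + f / 3 ^ k ∈ psiImageA a k F := by
  rw [psiImageA]
  refine Set.mem_iUnion₂.mpr ⟨fun i => J (i : ℕ), ?_, ?_⟩
  · rw [Finset.mem_filter]
    exact ⟨Finset.mem_univ _, hJ⟩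
  · exact ⟨f, hf, by rw [iterMap_eq, sum_fin_eq_Xp]⟩

noncomputable def dfltDigit (a : ℝ) (l : ℕ) : Fin 2 :=
  if Even (∑ m ∈ Finset.Ico 1 (l + 1), triadicDigit a m) then 1 else 0

lemma dfltDigit_mem (a : ℝ) (l : ℕ) : dfltDigit a l ∈ Nak a (l + 1) := by
  rw [dfltDigit, Nak]
  split_ifs <;> decide

lemma mainA {a : ℝ} (ha0 : 0 < a) (ha1 : a < 1)
    (hirr : ∀ (N : ℕ) (m : ℤ), (3:ℝ) ^ N * a ≠ (m : ℝ)) (F : Set ℝ)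
    (hF : IsCompact F) (hFne : F.Nonempty) :
    Tendsto (fun k => hausdorffDist (psiImageA a k F)
      (cantorSet ∩ ((fun x => x + a) '' cantorSet))) atTop (nhds 0) := by
  obtain ⟨f₀, hf₀⟩ := hFne
  obtain ⟨B, hB⟩ := hF.isBounded.subset_closedBall 0
  have hFB : ∀ x ∈ F, |x| ≤ |B| := by
    intro x hx
    have := hB hx
    rw [Metric.mem_closedBall, Real.dist_eq, sub_zero] at this
    exact this.trans (le_abs_self B)
  set C : ℝ := |B| + 1 with hC
  set E : Set ℝ := cantorSet ∩ ((fun x => x + a) '' cantorSet) with hE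
  have key : ∀ k : ℕ, hausdorffDist (psiImageA a k F) E ≤ C * (1/3) ^ k := by
    intro k
    have hp : (0:ℝ) < 3 ^ k := by positivity
    have hpow : C * (1/3:ℝ) ^ k = C / 3 ^ k := by
      rw [div_pow, one_pow]; ring
    apply hausdorffDist_le_of_mem_dist (by positivity)
    · -- forward direction
      intro x hx
      rw [psiImageA] at hx
      obtain ⟨j, hj, f, hf, hxeq⟩ := Set.mem_iUnion₂.mp hx
      rw [Finset.mem_filter] at hj
      have hadm : ∀ i : Fin k, j i ∈ Nak a ((i : ℕ) + 1) := hj.2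
      classical
      set J : ℕ → Fin 2 := fun l => if h : l < k then j ⟨l, h⟩ else dfltDigit a l with hJ
      have hJadm : ∀ N : ℕ, J N ∈ Nak a (N + 1) := by
        intro N
        rw [hJ]
        dsimp only
        split_ifs with h
        · exact hadm ⟨N, h⟩
        · exact dfltDigit_mem a N
      have hJj : ∀ i : Fin k, J (i : ℕ) = j i := by
        intro i
        rw [hJ]
        dsimp only
        rw [dif_pos i.2]
      refine ⟨cpoint J, ?_, ?_⟩
      · obtain ⟨v, hv⟩ := coreA (le_of_lt ha0) ha1 J hJadm
        exact ⟨cpoint_mem_cantorSet J, cpoint v, cpoint_mem_cantorSet v, by dsimp only; linarith⟩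
      · have hxval : x = Xp J k + f / 3 ^ k := by
          rw [← hxeq, iterMap_eq]
          congr 1
          rw [← sum_fin_eq_Xp]
          exact Finset.sum_congr rfl (fun i _ => by rw [hJj i])
        have hyval := cpoint_tail k J
        rw [Real.dist_eq, hxval, hyval]
        have h1 := cpoint_nonneg (fun l => J (l + k))
        have h2 := cpoint_le_one (fun l => J (l + k))
        have h3 := hFB f hf
        have habs : |f - cpoint (fun l => J (l + k))| ≤ C := by
          rw [abs_le] at h3 ⊢
          constructor <;> simp only [hC] <;> linarith
        have hsub : Xp J k + f / 3 ^ k - (Xp J k + cpoint (fun l => J (l + k)) / 3 ^ k)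
            = (f - cpoint (fun l => J (l + k))) / 3 ^ k := by ring
        rw [hsub, abs_div, abs_of_pos hp, hpow]
        gcongr
    · -- backward direction
      intro y hy
      obtain ⟨hyK, z, hzK, hz⟩ := hy
      obtain ⟨u, hu⟩ := exists_cpoint hyK
      obtain ⟨v, hv⟩ := exists_cpoint hzK
      have huv : cpoint u = cpoint v + a := by
        rw [hu, hv]
        dsimp only at hz
        linarith
      have hadm := coreB ha0 ha1 hirr u v huv
      refine ⟨Xp u k + f₀ / 3 ^ k, mem_psiImageA (fun i => hadm (i : ℕ)) hf₀, ?_⟩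
      have hyval : y = Xp u k + cpoint (fun l => u (l + k)) / 3 ^ k := by
        rw [← hu]; exact cpoint_tail k u
      have h1 := cpoint_nonneg (fun l => u (l + k))
      have h2 := cpoint_le_one (fun l => u (l + k))
      have h3 := hFB f₀ hf₀
      have habs : |cpoint (fun l => u (l + k)) - f₀| ≤ C := by
        rw [abs_le] at h3 ⊢
        constructor <;> simp only [hC] <;> linarith
      rw [Real.dist_eq, hyval]
      have hsub : Xp u k + cpoint (fun l => u (l + k)) / 3 ^ k - (Xp u k + f₀ / 3 ^ k)
          = (cpoint (fun l => u (l + k)) - f₀) / 3 ^ k := by ring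
      rw [hsub, abs_div, abs_of_pos hp, hpow]
      gcongr
  have hT : Tendsto (fun k : ℕ => C * (1/3:ℝ) ^ k) atTop (nhds 0) := by
    have := (tendsto_pow_atTop_nhds_zero_of_lt_one
      (by norm_num : (0:ℝ) ≤ 1/3) (by norm_num)).const_mul C
    simpa using this
  exact squeeze_zero (fun k => hausdorffDist_nonneg) key hT

/-- For Lebesgue-almost every `a ∈ [0,1]`, the set `E_a = K ∩ (K + a)` is the
statistically self-similar set generated by `ψ_1(x) = x/3`, `ψ_2(x) = x/3 + 2/3` and
the index sets `N_{a,k}`: for every nonempty compact `F ⊆ ℝ`, `ψ_a^k(F) → E_a` in the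
Hausdorff metric as `k → ∞`. -/
theorem stmt18 :
    ∀ᵐ a ∂(volume.restrict (Set.Icc (0 : ℝ) 1)),
      ∀ F : Set ℝ, IsCompact F → F.Nonempty →
        Tendsto (fun k => hausdorffDist (psiImageA a k F)
          (cantorSet ∩ ((fun x => x + a) '' cantorSet))) atTop (nhds 0) := by
  have hW : volume {a : ℝ | ∃ (N : ℕ) (m : ℤ), (3:ℝ) ^ N * a = (m : ℝ)} = 0 := by
    apply Set.Countable.measure_zero
    have hsub : {a : ℝ | ∃ (N : ℕ) (m : ℤ), (3:ℝ) ^ N * a = (m : ℝ)}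
        ⊆ ⋃ (N : ℕ), ⋃ (m : ℤ), {((m : ℝ) / 3 ^ N)} := by
      rintro a ⟨N, m, h⟩
      refine Set.mem_iUnion.mpr ⟨N, Set.mem_iUnion.mpr ⟨m, ?_⟩⟩
      have hp : (3:ℝ) ^ N ≠ 0 := by positivity
      rw [Set.mem_singleton_iff, eq_div_iff hp]
      linarith
    exact Set.Countable.mono hsub
      (Set.countable_iUnion (fun N => Set.countable_iUnion (fun m => Set.countable_singleton _)))
  have h1 : ∀ᵐ a ∂(volume.restrict (Set.Icc (0:ℝ) 1)), a ∈ Set.Icc (0:ℝ) 1 :=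
    ae_restrict_mem measurableSet_Icc
  have h2 : ∀ᵐ a ∂(volume.restrict (Set.Icc (0:ℝ) 1)),
      ¬ ∃ (N : ℕ) (m : ℤ), (3:ℝ) ^ N * a = (m : ℝ) := by
    apply ae_restrict_of_ae
    rw [ae_iff]
    simpa only [not_not] using hW
  filter_upwards [h1, h2] with a haI hairr F hF hFne
  have h0 : a ≠ 0 := fun h => hairr ⟨0, 0, by simp [h]⟩
  have h1' : a ≠ 1 := fun h => hairr ⟨0, 1, by simp [h]⟩
  exact mainA (lt_of_le_of_ne haI.1 (Ne.symm h0)) (lt_of_le_of_ne haI.2 h1')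
    (fun N m h => hairr ⟨N, m, h⟩) F hF hFne
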